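/- Maximality of Sω: Let Sω be the infinite symmetric group of finitely supported permutations of ℕ⁺, presented by Coxeter generators σ_i. If t is an element of Sω with t ≠ 1, and X is the quotient of Sω by the additional relation t = 1, then in X all generators coincide: σ_m = σ_n in X for all m, n ∈ ℕ⁺. -/

import Mathlib

/-!
The map `σ_i ↦ (i-1 i)` embeds `Sω` into `Perm ℕ`: every element of `⟨σ_1, …, σ_{n+1}⟩` is
`h * w` with `h ∈ ⟨σ_1, …, σ_n⟩` and `w` one of the words `σ_{k+j} ⋯ σ_{k+1}` (`k + j = n + 1`),
which sends `k` to `n + 1`, so only `w = 1` can give a trivial permutation.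

Hence the image of `ker f` is a nontrivial group of finitary permutations normalised by every
transposition. If `τ` in it moves `a` and fixes `c`, then `(a c) τ (a c) τ⁻¹` is a 3-cycle, and
conjugating by transpositions turns it into `(i i+1)(i+1 i+2)`, the image of `σ_{i+1} σ_{i+2}`.
So `f σ_{i+1} = (f σ_{i+2})⁻¹ = f σ_{i+2}`.
-/

open FreeGroup in
/-- The Coxeter relations presenting the infinite symmetric group `Sω` of finitely supported
permutations of `ℕ⁺`: `σ_i² = 1`, `σ_{i+1} σ_i σ_{i+1} = σ_i σ_{i+1} σ_i`, and
`σ_{k+2} σ_j = σ_j σ_{k+2}` for `j ≤ k`. -/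
def SomegaRels : Set (FreeGroup ℕ+) :=
  {w | (∃ i : ℕ+, w = of i * of i) ∨
    (∃ i : ℕ+, w = (of (i + 1) * of i * of (i + 1)) * (of i * of (i + 1) * of i)⁻¹) ∨
    (∃ j k : ℕ+, j ≤ k ∧ w = (of (k + 2) * of j) * (of j * of (k + 2))⁻¹)}

/-- The infinite symmetric group `Sω`, presented by the Coxeter generators `σ_i`. -/
def Somega : Type := PresentedGroup SomegaRels

instance : Group Somega := by unfold Somega; infer_instance

/-- The generator `σ_i` (the transposition of `i` and `i+1`) of `Sω`. -/
def Somega.sigma (i : ℕ+) : Somega := PresentedGroup.of i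

open Equiv

namespace Equiv.Perm

variable {α : Type*} [DecidableEq α] {N : Subgroup (Perm α)}

theorem swap_mul_swap_mem_of_swap_mul_swap_mem
    (hN : ∀ σ ∈ N, ∀ p q : α, swap p q * σ * swap p q ∈ N)
    {a b c : α} (hab : a ≠ b) (hac : a ≠ c) (hbc : b ≠ c) (habc : swap a b * swap b c ∈ N)
    {x y z : α} (hxy : x ≠ y) (hxz : x ≠ z) (hyz : y ≠ z) : swap x y * swap y z ∈ N := by
  have conj : ∀ {a b c : α} (p q : α), swap a b * swap b c ∈ N →
      swap (swap p q a) (swap p q b) * swap (swap p q b) (swap p q c) ∈ N := by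
    intro a b c p q h
    simpa only [swap_apply_apply, swap_inv, mul_assoc, swap_mul_self_mul] using hN _ h p q
  -- move `a` to `x`, then the image of `b` to `y`, then the image of `c` to `z`
  set b₁ := swap a x b
  set c₁ := swap a x c
  have hb₁ : b₁ ≠ x := by simpa [b₁] using (swap a x).injective.ne hab.symm
  have hc₁ : c₁ ≠ x := by simpa [c₁] using (swap a x).injective.ne hac.symm
  have hbc₁ : b₁ ≠ c₁ := (swap a x).injective.ne hbc
  have h₁ : swap x b₁ * swap b₁ c₁ ∈ N := by simpa using conj a x habc
  set c₂ := swap b₁ y c₁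
  have hc₂x : c₂ ≠ x := by
    simpa [c₂, swap_apply_of_ne_of_ne hb₁.symm hxy] using (swap b₁ y).injective.ne hc₁
  have hc₂y : c₂ ≠ y := by simpa [c₂] using (swap b₁ y).injective.ne hbc₁.symm
  have h₂ : swap x y * swap y c₂ ∈ N := by
    simpa [swap_apply_of_ne_of_ne hb₁.symm hxy] using conj b₁ y h₁
  simpa [swap_apply_of_ne_of_ne hc₂x.symm hxz, swap_apply_of_ne_of_ne hc₂y.symm hyz]
    using conj c₂ z h₂

theorem swap_mul_swap_mem_of_ne_of_fixed
    (hN : ∀ σ ∈ N, ∀ p q : α, swap p q * σ * swap p q ∈ N)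
    {σ : Perm α} (hσ : σ ∈ N) {a c : α} (ha : σ a ≠ a) (hc : σ c = c)
    {x y z : α} (hxy : x ≠ y) (hxz : x ≠ z) (hyz : y ≠ z) : swap x y * swap y z ∈ N := by
  have hac : a ≠ c := by rintro rfl; exact ha hc
  have hca : c ≠ σ a := fun h => hac (σ.injective (hc.trans h)).symm
  have hcomm : swap a c * swap c (σ a) ∈ N := by
    have := mul_mem (hN σ hσ a c) (inv_mem hσ)
    rwa [mul_assoc (swap a c), mul_assoc (swap a c), ← swap_apply_apply, hc,
      swap_comm (σ a)] at this
  exact swap_mul_swap_mem_of_swap_mul_swap_mem hN hac (Ne.symm ha) hca hcomm hxy hxz hyz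

end Equiv.Perm

namespace Somega

section Relations

open FreeGroup

theorem sigma_mul_self (i : ℕ+) : sigma i * sigma i = 1 :=
  PresentedGroup.one_of_mem (x := of i * of i) (Or.inl ⟨i, rfl⟩)

theorem sigma_braid (i : ℕ+) :
    sigma (i + 1) * sigma i * sigma (i + 1) = sigma i * sigma (i + 1) * sigma i :=
  PresentedGroup.mk_eq_mk_of_mul_inv_mem (x := of (i + 1) * of i * of (i + 1))
    (y := of i * of (i + 1) * of i) (Or.inr (Or.inl ⟨i, rfl⟩))

theorem sigma_commute {j k : ℕ+} (h : j ≤ k) : Commute (sigma j) (sigma (k + 2)) :=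
  (PresentedGroup.mk_eq_mk_of_mul_inv_mem (x := of (k + 2) * of j) (y := of j * of (k + 2))
    (Or.inr (Or.inr ⟨j, k, h, rfl⟩))).symm

end Relations

/-- `σ_i` acts on `ℕ` as the transposition of `i - 1` and `i`. -/
def toPerm : Somega →* Perm ℕ :=
  PresentedGroup.toGroup (f := fun i : ℕ+ => swap i.natPred (i.natPred + 1)) <| by
    have natPred_add (i k : ℕ+) : (i + k).natPred = i.natPred + k := by
      simp only [PNat.natPred, PNat.add_coe]; have := i.pos; omega
    rintro r (⟨i, rfl⟩ | ⟨i, rfl⟩ | ⟨j, k, hjk, rfl⟩) <;>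
      simp only [map_mul, map_inv, FreeGroup.lift_apply_of, mul_inv_eq_one, natPred_add,
        swap_mul_self, PNat.val_ofNat]
    · ext x; simp only [Perm.mul_apply, swap_apply_def]; split_ifs <;> omega
    · have := PNat.natPred_le_natPred.mpr hjk
      ext x; simp only [Perm.mul_apply, swap_apply_def]; split_ifs <;> omega

/-- `gen i` is `σ_{i+1}`; indexing from `0` keeps the arithmetic in `ℕ`, where `toPerm (gen i)`
is the transposition of `i` and `i + 1`. -/
def gen (i : ℕ) : Somega := sigma i.succPNat

theorem sigma_eq_gen (i : ℕ+) : sigma i = gen i.natPred := by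
  rw [gen, PNat.succPNat_natPred]

theorem gen_mul_self (i : ℕ) : gen i * gen i = 1 := sigma_mul_self _

theorem gen_inv (i : ℕ) : (gen i)⁻¹ = gen i := inv_eq_of_mul_eq_one_right (gen_mul_self i)

theorem gen_braid (i : ℕ) : gen (i + 1) * gen i * gen (i + 1) = gen i * gen (i + 1) * gen i :=
  sigma_braid _

theorem commute_gen_of_add_two_le {a b : ℕ} (h : a + 2 ≤ b) : Commute (gen a) (gen b) := by
  obtain ⟨c, rfl⟩ := Nat.exists_eq_add_of_le h
  have hb : (a + c).succPNat + 2 = (a + 2 + c).succPNat := PNat.eq <| by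
    simp only [PNat.add_coe, Nat.succPNat_coe, PNat.val_ofNat]; omega
  simpa only [gen, hb] using sigma_commute (j := a.succPNat) (k := (a + c).succPNat) (by simp)

theorem commute_gen {a b : ℕ} (h : a + 2 ≤ b ∨ b + 2 ≤ a) : Commute (gen a) (gen b) :=
  h.elim commute_gen_of_add_two_le fun h => (commute_gen_of_add_two_le h).symm

@[simp]
theorem toPerm_gen (i : ℕ) : toPerm (gen i) = swap i (i + 1) := by
  have h : toPerm (gen i) = swap i.succPNat.natPred (i.succPNat.natPred + 1) :=
    PresentedGroup.toGroup.of _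
  rwa [Nat.natPred_succPNat] at h

/-- `descWord k j = gen (k + j - 1) * ⋯ * gen (k + 1) * gen k`. The words `descWord k j` with
`k + j = n + 1` represent the right cosets of `parabolic n` in `parabolic (n + 1)`. -/
def descWord (k : ℕ) : ℕ → Somega
  | 0 => 1
  | j + 1 => gen (k + j) * descWord k j

@[simp]
theorem descWord_zero (k : ℕ) : descWord k 0 = 1 := rfl

theorem descWord_succ (k j : ℕ) : descWord k (j + 1) = gen (k + j) * descWord k j := rfl

theorem descWord_add (k a b : ℕ) : descWord k (a + b) = descWord (k + a) b * descWord k a := by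
  induction b with
  | zero => simp
  | succ b ih => rw [← add_assoc, descWord_succ, ih, descWord_succ, mul_assoc, add_assoc]

theorem descWord_succ' (k j : ℕ) : descWord k (j + 1) = descWord (k + 1) j * gen k := by
  rw [add_comm j, descWord_add]
  simp [descWord_succ]

theorem commute_gen_descWord {i k j : ℕ} (h : i + 2 ≤ k ∨ k + j + 1 ≤ i) :
    Commute (gen i) (descWord k j) := by
  induction j with
  | zero => exact Commute.one_right _
  | succ j ih => exact (commute_gen (by omega)).mul_right (ih (by omega))

theorem descWord_mul_gen_interior (k a r : ℕ) :
    descWord k (a + 2 + r) * gen (k + a + 1) = gen (k + a) * descWord k (a + 2 + r) := by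
  have hsplit : descWord k (a + 2 + r) =
      descWord (k + a + 2) r * (gen (k + a + 1) * gen (k + a)) * descWord k a := by
    rw [descWord_add, descWord_add k a 2, add_assoc k a 2]
    simp [descWord_succ, mul_assoc]
  have hhead : Commute (gen (k + a)) (descWord (k + a + 2) r) :=
    commute_gen_descWord (Or.inl le_rfl)
  have htail : Commute (gen (k + a + 1)) (descWord k a) :=
    commute_gen_descWord (Or.inr le_rfl)
  calc descWord k (a + 2 + r) * gen (k + a + 1)
      = descWord (k + a + 2) r * (gen (k + a + 1) * gen (k + a) * gen (k + a + 1)) *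
          descWord k a := by rw [hsplit, mul_assoc _ (descWord k a), ← htail.eq]; group
    _ = descWord (k + a + 2) r * gen (k + a) * (gen (k + a + 1) * gen (k + a)) *
          descWord k a := by rw [gen_braid]; group
    _ = gen (k + a) * descWord k (a + 2 + r) := by rw [← hhead.eq, hsplit]; group

def parabolic (n : ℕ) : Subgroup Somega := Subgroup.closure (gen '' Set.Iio n)

theorem gen_mem_parabolic {i n : ℕ} (h : i < n) : gen i ∈ parabolic n :=
  Subgroup.subset_closure ⟨i, h, rfl⟩

theorem parabolic_mono : Monotone parabolic := fun _ _ h =>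
  Subgroup.closure_mono (Set.image_mono (Set.Iio_subset_Iio h))

theorem parabolic_zero : parabolic 0 = ⊥ := by
  simp [parabolic]

theorem descWord_mul_gen {n k j i : ℕ} (hkj : k + j = n + 1) (hi : i ≤ n) :
    ∃ h ∈ parabolic n, ∃ k' j', k' + j' = n + 1 ∧ descWord k j * gen i = h * descWord k' j' := by
  rcases lt_or_ge i k with hik | hki
  · rcases (Nat.succ_le_of_lt hik).eq_or_lt with rfl | hik
    · exact ⟨1, one_mem _, i, j + 1, by omega, by rw [one_mul, descWord_succ']⟩
    · exact ⟨gen i, gen_mem_parabolic (by omega), k, j, hkj,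
        (commute_gen_descWord (Or.inl hik)).eq.symm⟩
  rcases hki.eq_or_lt with rfl | hki
  · obtain ⟨j, rfl⟩ : ∃ j', j = j' + 1 := ⟨j - 1, by omega⟩
    exact ⟨1, one_mem _, k + 1, j, by omega, by
      rw [one_mul, descWord_succ', mul_assoc, gen_mul_self, mul_one]⟩
  · obtain ⟨a, rfl⟩ : ∃ a, i = k + a + 1 := ⟨i - k - 1, by omega⟩
    obtain ⟨r, rfl⟩ : ∃ r, j = a + 2 + r := ⟨j - a - 2, by omega⟩
    exact ⟨gen (k + a), gen_mem_parabolic (by omega), k, a + 2 + r, hkj,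
      descWord_mul_gen_interior k a r⟩

theorem exists_mul_descWord_of_mem_parabolic_succ {n : ℕ} {x : Somega}
    (hx : x ∈ parabolic (n + 1)) :
    ∃ h ∈ parabolic n, ∃ k j, k + j = n + 1 ∧ x = h * descWord k j := by
  induction hx using Subgroup.closure_induction_right with
  | one => exact ⟨1, one_mem _, n + 1, 0, rfl, by simp⟩
  | mul_right x _ y hy ih =>
    obtain ⟨i, hi, rfl⟩ := hy
    obtain ⟨h, hh, k, j, hkj, rfl⟩ := ih
    obtain ⟨h', hh', k', j', hkj', he⟩ := descWord_mul_gen hkj (Nat.lt_succ_iff.mp hi)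
    exact ⟨h * h', mul_mem hh hh', k', j', hkj', by rw [mul_assoc, he, mul_assoc]⟩
  | mul_inv_cancel x _ y hy ih =>
    obtain ⟨i, hi, rfl⟩ := hy
    obtain ⟨h, hh, k, j, hkj, rfl⟩ := ih
    obtain ⟨h', hh', k', j', hkj', he⟩ := descWord_mul_gen hkj (Nat.lt_succ_iff.mp hi)
    exact ⟨h * h', mul_mem hh hh', k', j', hkj', by rw [gen_inv, mul_assoc, he, mul_assoc]⟩

theorem exists_mem_parabolic (x : Somega) : ∃ n, x ∈ parabolic n := by
  have hx : x ∈ ⨆ n, parabolic n := by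
    refine PresentedGroup.generated_by SomegaRels _ (fun i => ?_) x
    have : sigma i ∈ parabolic (i.natPred + 1) :=
      sigma_eq_gen i ▸ gen_mem_parabolic (Nat.lt_succ_self _)
    exact Subgroup.mem_iSup_of_mem _ this
  rwa [Subgroup.mem_iSup_of_directed parabolic_mono.directed_le] at hx

theorem toPerm_descWord_apply (k j : ℕ) : toPerm (descWord k j) k = k + j := by
  induction j with
  | zero => simp
  | succ j ih =>
    rw [descWord_succ, map_mul, Perm.mul_apply, ih, toPerm_gen, swap_apply_left, add_assoc]

theorem toPerm_apply_of_mem_parabolic {n : ℕ} {x : Somega} (hx : x ∈ parabolic n) {m : ℕ}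
    (hm : n < m) : toPerm x m = m := by
  have : parabolic n ≤ (MulAction.stabilizer (Perm ℕ) m).comap toPerm := by
    refine (Subgroup.closure_le _).2 ?_
    rintro _ ⟨i, hi, rfl⟩
    simp only [Set.mem_Iio] at hi
    simp only [SetLike.mem_coe, Subgroup.mem_comap, MulAction.mem_stabilizer_iff,
      Perm.smul_def, toPerm_gen]
    exact swap_apply_of_ne_of_ne (by omega) (by omega)
  exact this hx

theorem eq_one_of_mem_parabolic {n : ℕ} {x : Somega} (hx : x ∈ parabolic n)
    (h1 : toPerm x = 1) : x = 1 := by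
  induction n generalizing x with
  | zero => rwa [parabolic_zero, Subgroup.mem_bot] at hx
  | succ n ih =>
    obtain ⟨h, hh, k, j, hkj, rfl⟩ := exists_mul_descWord_of_mem_parabolic_succ hx
    -- the coset representative sends `k` to `n + 1`, which `h` fixes
    have hk : toPerm (h * descWord k j) k = k + j := by
      rw [map_mul, Perm.mul_apply, toPerm_descWord_apply, hkj,
        toPerm_apply_of_mem_parabolic hh n.lt_succ_self]
    obtain rfl : j = 0 := by simpa [h1] using hk
    rw [descWord_zero, mul_one] at h1 ⊢
    exact ih hh h1

theorem toPerm_injective : Function.Injective toPerm := by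
  refine (injective_iff_map_eq_one toPerm).2 fun x hx => ?_
  obtain ⟨n, hn⟩ := exists_mem_parabolic x
  exact eq_one_of_mem_parabolic hn hx

theorem swap_mem_range_toPerm (a b : ℕ) : swap a b ∈ toPerm.range := by
  wlog hab : a < b generalizing a b
  · rcases (not_lt.mp hab).eq_or_lt with rfl | hba
    · rw [swap_self]; exact one_mem _
    · rw [swap_comm]; exact this b a hba
  induction b, hab using Nat.le_induction with
  | base => exact ⟨gen a, toPerm_gen a⟩
  | succ b hab ih =>
    have hconj := swap_apply_apply (swap b (b + 1)) a b
    rw [swap_apply_of_ne_of_ne (by omega) (by omega), swap_apply_left] at hconj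
    rw [hconj]
    exact mul_mem (mul_mem ⟨gen b, toPerm_gen b⟩ ih) (inv_mem ⟨gen b, toPerm_gen b⟩)

theorem gen_mul_gen_mem_ker {X : Type*} [Group X] {f : Somega →* X} {t : Somega} (ht : t ≠ 1)
    (h : f t = 1) (i : ℕ) : gen i * gen (i + 1) ∈ f.ker := by
  set N := f.ker.map toPerm
  have hN : ∀ σ ∈ N, ∀ p q : ℕ, swap p q * σ * swap p q ∈ N := by
    rintro _ ⟨x, hx, rfl⟩ p q
    obtain ⟨v, hv⟩ := swap_mem_range_toPerm p q
    refine ⟨v * x * v⁻¹, f.normal_ker.conj_mem x hx v, ?_⟩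
    rw [map_mul, map_mul, map_inv, hv, swap_inv]
  obtain ⟨a, ha⟩ : ∃ a, toPerm t a ≠ a := by
    by_contra! hfix
    exact ht (toPerm_injective (Perm.ext hfix |>.trans (map_one toPerm).symm))
  obtain ⟨n, hn⟩ := exists_mem_parabolic t
  have hcycle := Perm.swap_mul_swap_mem_of_ne_of_fixed hN ⟨t, h, rfl⟩ ha
    (toPerm_apply_of_mem_parabolic hn n.lt_succ_self)
    (x := i) (y := i + 1) (z := i + 2) (by omega) (by omega) (by omega)
  rwa [← Subgroup.mem_map_iff_mem toPerm_injective, map_mul, toPerm_gen, toPerm_gen]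

end Somega

theorem somega_maximality {X : Type*} [Group X] (f : Somega →* X)
    (t : Somega) (ht : t ≠ 1) (h : f t = 1) (m n : ℕ+) :
    f (Somega.sigma m) = f (Somega.sigma n) := by
  have hstep (i : ℕ) : f (Somega.gen (i + 1)) = f (Somega.gen i) := by
    have := Somega.gen_mul_gen_mem_ker ht h i
    rwa [MonoidHom.mem_ker, map_mul, mul_eq_one_iff_eq_inv, ← map_inv, Somega.gen_inv,
      eq_comm] at this
  have hconst (i : ℕ) : f (Somega.gen i) = f (Somega.gen 0) := by
    induction i with
    | zero => rfl
    | succ i ih => rw [hstep, ih]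
  rw [Somega.sigma_eq_gen, Somega.sigma_eq_gen, hconst m.natPred, hconst n.natPred]
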